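/- Let X and Y be real random variables with |X| ≤ M₁ a.s. and |Y| ≤ M₂ a.s., measurable with respect to sub-σ-algebras 𝒜 and ℬ respectively. Then |Cov(X,Y)| ≤ 4·M₁·M₂·α(𝒜,ℬ), where α(𝒜,ℬ) = sup_{A∈𝒜, B∈ℬ} |P(A∩B) − P(A)P(B)| is the strong mixing coefficient. -/

import Mathlib

/-!
Conditioning on `𝒜`, `cov(X, Y) = E[X h]` with `h = E[Y - E Y | 𝒜]`, so
`|cov(X, Y)| ≤ M₁ E|h|`. Since `E h = 0`, `E|h| = 2 E[1_A h] = 2 cov(1_A, Y)` for the `𝒜`-set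
`A = {h ≥ 0}`. The same argument applied to `Y` and `1_A`, now conditioning on `ℬ`, yields a
`ℬ`-set `B` with `cov(Y, 1_A) ≤ 2 M₂ cov(1_B, 1_A) = 2 M₂ (P(A ∩ B) - P(A) P(B)) ≤ 2 M₂ α`.
-/

open MeasureTheory ProbabilityTheory

lemma abs_eq_two_mul_indicator_nonneg_mul_sub {Ω : Type*} (h : Ω → ℝ) (ω : Ω) :
    |h ω| = 2 * ({ω | 0 ≤ h ω}.indicator 1 ω * h ω) - h ω := by
  by_cases hω : 0 ≤ h ω
  · simp [hω, abs_of_nonneg hω]; ring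
  · simp [hω, abs_of_neg (not_le.1 hω)]

lemma MeasureTheory.integral_mul_condExp_of_bound {Ω : Type*} {m mΩ : MeasurableSpace Ω}
    {μ : Measure Ω} [IsFiniteMeasure μ] (hm : m ≤ mΩ) {φ g : Ω → ℝ} {C : ℝ}
    (hφ : StronglyMeasurable[m] φ) (hφC : ∀ᵐ ω ∂μ, ‖φ ω‖ ≤ C) (hg : Integrable g μ) :
    ∫ ω, φ ω * μ[g | m] ω ∂μ = ∫ ω, φ ω * g ω ∂μ :=
  calc ∫ ω, φ ω * μ[g | m] ω ∂μ = ∫ ω, μ[φ * g | m] ω ∂μ :=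
        integral_congr_ae (condExp_stronglyMeasurable_mul_of_bound hm hφ hg C hφC).symm
    _ = ∫ ω, φ ω * g ω ∂μ := integral_condExp hm

namespace ProbabilityTheory

variable {Ω : Type*} {mΩ : MeasurableSpace Ω} {μ : Measure Ω}

variable (μ) in
noncomputable def strongMixingCoeff (𝒜 ℬ : MeasurableSpace Ω) : ℝ :=
  sSup {r : ℝ | ∃ A B : Set Ω, MeasurableSet[𝒜] A ∧ MeasurableSet[ℬ] B ∧
    r = |μ.real (A ∩ B) - μ.real A * μ.real B|}

variable [IsProbabilityMeasure μ]

lemma abs_measureReal_inter_sub_mul_le_strongMixingCoeff {𝒜 ℬ : MeasurableSpace Ω}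
    {A B : Set Ω} (hA : MeasurableSet[𝒜] A) (hB : MeasurableSet[ℬ] B) :
    |μ.real (A ∩ B) - μ.real A * μ.real B| ≤ strongMixingCoeff μ 𝒜 ℬ := by
  refine le_csSup ⟨1, ?_⟩ ⟨A, B, hA, hB, rfl⟩
  rintro _ ⟨A, B, -, -, rfl⟩
  exact abs_sub_le_of_nonneg_of_le measureReal_nonneg measureReal_le_one
    (mul_nonneg measureReal_nonneg measureReal_nonneg)
    (mul_le_one₀ measureReal_le_one measureReal_nonneg measureReal_le_one)

lemma covariance_indicator_one {A B : Set Ω} (hA : MeasurableSet A) (hB : MeasurableSet B) :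
    cov[A.indicator 1, B.indicator 1; μ] = μ.real (A ∩ B) - μ.real A * μ.real B := by
  have h1 : MemLp (1 : Ω → ℝ) 2 μ := memLp_const 1
  rw [covariance_eq_sub (h1.indicator hA) (h1.indicator hB), ← Set.inter_indicator_one,
    integral_indicator_one (hA.inter hB), integral_indicator_one hA, integral_indicator_one hB]

lemma covariance_eq_integral_mul_sub {f g : Ω → ℝ} {C : ℝ} (hf : AEStronglyMeasurable f μ)
    (hfC : ∀ᵐ ω ∂μ, ‖f ω‖ ≤ C) (hg : Integrable g μ) :
    cov[f, g; μ] = ∫ ω, f ω * (g ω - μ[g]) ∂μ := by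
  have hg' : Integrable (fun ω ↦ g ω - μ[g]) μ := hg.sub (integrable_const _)
  have hmean : ∫ ω, (g ω - μ[g]) ∂μ = 0 := by
    rw [integral_sub hg (integrable_const _)]; simp
  simp_rw [covariance, sub_mul]
  rw [integral_sub (hg'.bdd_mul hf hfC) (hg'.const_mul _), integral_const_mul, hmean, mul_zero,
    sub_zero]

lemma exists_measurableSet_abs_covariance_le {m : MeasurableSpace Ω} (hm : m ≤ mΩ)
    {f g : Ω → ℝ} {M : ℝ} (hf : Measurable[m] f) (hfM : ∀ᵐ ω ∂μ, |f ω| ≤ M)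
    (hg : Integrable g μ) :
    ∃ A, MeasurableSet[m] A ∧ |cov[f, g; μ]| ≤ 2 * M * cov[A.indicator 1, g; μ] := by
  have hg' : Integrable (fun ω ↦ g ω - μ[g]) μ := hg.sub (integrable_const _)
  set h := μ[fun ω ↦ g ω - μ[g] | m]
  have hh : StronglyMeasurable[m] h := stronglyMeasurable_condExp
  have hh_int : Integrable h μ := integrable_condExp
  set A := {ω | 0 ≤ h ω}
  have hA : MeasurableSet[m] A := measurableSet_le measurable_const hh.measurable
  have hind : StronglyMeasurable[m] (A.indicator (1 : Ω → ℝ)) := stronglyMeasurable_one.indicator hA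
  refine ⟨A, hA, ?_⟩
  have hfM' : ∀ᵐ ω ∂μ, ‖f ω‖ ≤ M := hfM
  have hAM : ∀ᵐ ω ∂μ, ‖A.indicator (1 : Ω → ℝ) ω‖ ≤ 1 := .of_forall fun ω ↦ by
    simp only [Set.indicator_apply]; split_ifs <;> simp
  have hcov_f : cov[f, g; μ] = ∫ ω, f ω * h ω ∂μ := by
    rw [covariance_eq_integral_mul_sub (hf.mono hm le_rfl).aestronglyMeasurable hfM' hg]
    exact (integral_mul_condExp_of_bound hm hf.stronglyMeasurable hfM' hg').symm
  have hcov_A : cov[A.indicator 1, g; μ] = ∫ ω, A.indicator 1 ω * h ω ∂μ := by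
    rw [covariance_eq_integral_mul_sub (hind.mono hm).aestronglyMeasurable hAM hg]
    exact (integral_mul_condExp_of_bound hm hind hAM hg').symm
  have hmean : ∫ ω, h ω ∂μ = 0 := by
    rw [integral_condExp hm, integral_sub hg (integrable_const _)]; simp
  have habs : ∫ ω, |h ω| ∂μ = 2 * cov[A.indicator 1, g; μ] := by
    simp_rw [abs_eq_two_mul_indicator_nonneg_mul_sub h]
    rw [integral_sub _ hh_int, integral_const_mul, hmean, hcov_A, sub_zero]
    exact (hh_int.bdd_mul (hind.mono hm).aestronglyMeasurable hAM).const_mul 2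
  rw [hcov_f, mul_comm 2 M, mul_assoc, ← habs, ← integral_const_mul, ← Real.norm_eq_abs]
  refine norm_integral_le_of_norm_le (hh_int.abs.const_mul M) ?_
  filter_upwards [hfM] with ω hω
  rw [norm_mul, Real.norm_eq_abs, Real.norm_eq_abs]
  exact mul_le_mul_of_nonneg_right hω (abs_nonneg _)

end ProbabilityTheory

theorem stmt_18 {Ω : Type*} [m0 : MeasurableSpace Ω] (μ : Measure Ω) [IsProbabilityMeasure μ]
    (𝒜 ℬ : MeasurableSpace Ω) (h𝒜 : 𝒜 ≤ m0) (hℬ : ℬ ≤ m0)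
    (X Y : Ω → ℝ) (hX : Measurable[𝒜] X) (hY : Measurable[ℬ] Y)
    (M₁ M₂ : ℝ) (hM₁ : ∀ᵐ ω ∂μ, |X ω| ≤ M₁) (hM₂ : ∀ᵐ ω ∂μ, |Y ω| ≤ M₂)
    (α : ℝ)
    (hα : α = sSup {r : ℝ | ∃ A B : Set Ω, MeasurableSet[𝒜] A ∧ MeasurableSet[ℬ] B ∧
      r = |(μ (A ∩ B)).toReal - (μ A).toReal * (μ B).toReal|}) :
    |(∫ ω, X ω * Y ω ∂μ) - (∫ ω, X ω ∂μ) * (∫ ω, Y ω ∂μ)| ≤ 4 * M₁ * M₂ * α := by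
  have hXL : MemLp X 2 μ := .of_bound (hX.mono h𝒜 le_rfl).aestronglyMeasurable M₁ hM₁
  have hYL : MemLp Y 2 μ := .of_bound (hY.mono hℬ le_rfl).aestronglyMeasurable M₂ hM₂
  have hM₁_nonneg : 0 ≤ M₁ := let ⟨_, h⟩ := hM₁.exists; (abs_nonneg _).trans h
  have hM₂_nonneg : 0 ≤ M₂ := let ⟨_, h⟩ := hM₂.exists; (abs_nonneg _).trans h
  obtain ⟨A, hA, hXY⟩ :=
    exists_measurableSet_abs_covariance_le h𝒜 hX hM₁ (hYL.integrable one_le_two)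
  obtain ⟨B, hB, hYA⟩ := exists_measurableSet_abs_covariance_le hℬ hY hM₂
    ((integrable_const 1 : Integrable (1 : Ω → ℝ) μ).indicator (h𝒜 _ hA))
  have hcov : ∫ ω, X ω * Y ω ∂μ - μ[X] * μ[Y] = cov[X, Y; μ] := (covariance_eq_sub hXL hYL).symm
  rw [hcov, hα]
  calc |cov[X, Y; μ]| ≤ 2 * M₁ * cov[A.indicator 1, Y; μ] := hXY
    _ ≤ 2 * M₁ * (2 * M₂ * cov[B.indicator 1, A.indicator 1; μ]) := by
        rw [covariance_comm]; gcongr; exact (le_abs_self _).trans hYA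
    _ = 4 * M₁ * M₂ * (μ.real (A ∩ B) - μ.real A * μ.real B) := by
        rw [covariance_comm, covariance_indicator_one (h𝒜 _ hA) (hℬ _ hB)]; ring
    _ ≤ 4 * M₁ * M₂ * strongMixingCoeff μ 𝒜 ℬ := by
        gcongr
        exact (le_abs_self _).trans (abs_measureReal_inter_sub_mul_le_strongMixingCoeff hA hB)
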